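/- Let b be a root of q₅(x) = x⁵ − 27x⁴ + 261x³ − 1077x² + 1766x − 964, L = ℚ(b), and O_L the ring of integers of L. Set w = 35/4 − (435/8)b + (565/16)b² − (25/4)b³ + (5/16)b⁴ and v = 51/4 − (151/8)b + (129/16)b² − (5/4)b³ + (1/16)b⁴. Then w and v are algebraic integers (lie in O_L), the O_L-ideal ⟨2, v⟩ is a prime ideal lying over 2 of absolute norm 4, and the O_L-ideal ⟨8, w⟩ equals ⟨2, v⟩³; in particular ⟨8, w⟩ has absolute norm 64. -/

import Mathlib

/-!
Put `π = v + 5 - b`. It is a root of `X² + (2b - 7)X + (5 - b)`, and its minimal polynomial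
`m = X⁵ + 4X⁴ - 48X³ + 85X² - 36X + 4` is irreducible modulo 3; since `b` generates `L` and has
degree at most 5, `[L : ℚ] = 5` and `N(π) = -m(0) = -4`. As `m(0) = 4` and `m'(0) = -36` is even,
`2 / π` is integral as well. Then `2 = π · (2 / π)`, `v = π (π + 2b - 6)` and `w = 5 π³ d` for an
explicit integral `d`, and explicit Bézout identities show that `2 / π` is coprime to the
cofactors `π + 2b - 6` and `5d`; hence `⟨2, v⟩ = ⟨π⟩` and `⟨8, w⟩ = ⟨π⟩³`. Finally `O_L / ⟨π⟩`
has `|N(π)| = 4` elements, characteristic 2, and contains a root of `X² + X + 1`, so it is the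
field with four elements and `⟨π⟩` is prime.
-/

open NumberField Polynomial

theorem Ideal.span_pair_mul_eq_span_singleton {R : Type*} [CommRing R] {π a c : R}
    (h : IsCoprime a c) : Ideal.span {π * a, π * c} = Ideal.span {π} := by
  obtain ⟨r, t, hrt⟩ := h
  refine le_antisymm ?_ ?_
  · rw [Ideal.span_le, Set.insert_subset_iff, Set.singleton_subset_iff]
    exact ⟨Ideal.mem_span_singleton.2 (dvd_mul_right _ _),
      Ideal.mem_span_singleton.2 (dvd_mul_right _ _)⟩
  · rw [Ideal.span_singleton_le_iff_mem, Ideal.mem_span_pair]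
    exact ⟨r, t, by linear_combination π * hrt⟩

theorem isField_of_card_eq_four {R : Type*} [CommRing R] (hcard : Nat.card R = 4)
    (h2 : (2 : R) = 0) {u : R} (hu : u ^ 2 + u + 1 = 0) : IsField R := by
  have : Finite R := Nat.finite_of_card_ne_zero (by omega)
  have : Nontrivial R := Finite.one_lt_card_iff_nontrivial.1 (by omega)
  classical
  have : Fintype R := Fintype.ofFinite R
  have h10 : (1 : R) ≠ 0 := one_ne_zero
  have hu0 : u ≠ 0 := fun h => h10 (by linear_combination hu - (u + 1) * h)
  have hu1 : u ≠ 1 := fun h => h10 (by linear_combination hu - h2 - (u + 2) * h)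
  have hu2 : u + 1 ≠ 0 := fun h => h10 (by linear_combination hu - u * h)
  have hu3 : u + 1 ≠ 1 := fun h => hu0 (by linear_combination h)
  have hu4 : u + 1 ≠ u := fun h => h10 (by linear_combination h)
  have huniv : ({0, 1, u, u + 1} : Finset R) = Finset.univ := by
    refine Finset.eq_univ_of_card _ ?_
    rw [Finset.card_insert_of_notMem (by simp [h10.symm, hu0.symm, hu2.symm]),
      Finset.card_insert_of_notMem (by simp [hu1.symm, hu3.symm]),
      Finset.card_pair hu4.symm, Fintype.card_eq_nat_card, hcard]
  refine ⟨⟨0, 1, h10.symm⟩, mul_comm, fun {x} hx => ?_⟩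
  have hx' : x ∈ ({0, 1, u, u + 1} : Finset R) := huniv ▸ Finset.mem_univ x
  simp only [Finset.mem_insert, Finset.mem_singleton] at hx'
  rcases hx' with h | h | h | h <;> rw [h] at hx ⊢
  · exact absurd rfl hx
  · exact ⟨1, one_mul 1⟩
  · exact ⟨u + 1, by linear_combination hu - h2⟩
  · exact ⟨u, by linear_combination hu - h2⟩

theorem IsIntegral.of_sq_eq {R A : Type*} [CommRing R] [CommRing A] [Algebra R A] {x s t : A}
    (hs : IsIntegral R s) (ht : IsIntegral R t) (h : x ^ 2 = s * x + t) : IsIntegral R x := by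
  let s' : integralClosure R A := ⟨s, hs⟩
  let t' : integralClosure R A := ⟨t, ht⟩
  refine isIntegral_trans (A := integralClosure R A) x ⟨X ^ 2 - C s' * X - C t', ?_, ?_⟩
  · monicity!
  · simp only [eval₂_sub, eval₂_mul, eval₂_pow, eval₂_X, eval₂_C]
    rw [h]
    simp [s', t']

namespace Polynomial

variable {F : Type*} [Field F]

lemma coeff_eq_of_X_pow_five_add_eq {a₀ a₁ a₂ a₃ a₄ b₀ b₁ b₂ b₃ b₄ : F}
    (h : X ^ 5 + C a₄ * X ^ 4 + C a₃ * X ^ 3 + C a₂ * X ^ 2 + C a₁ * X + C a₀ =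
      (X ^ 5 + C b₄ * X ^ 4 + C b₃ * X ^ 3 + C b₂ * X ^ 2 + C b₁ * X + C b₀ : F[X])) :
    a₄ = b₄ ∧ a₃ = b₃ ∧ a₂ = b₂ ∧ a₁ = b₁ ∧ a₀ = b₀ := by
  have h' := fun n => congrArg (coeff · n) h
  refine ⟨?_, ?_, ?_, ?_, ?_⟩
  · simpa [coeff_X, coeff_X_pow, coeff_C] using h' 4
  · simpa [coeff_X, coeff_X_pow, coeff_C] using h' 3
  · simpa [coeff_X, coeff_X_pow, coeff_C] using h' 2
  · simpa [coeff_X, coeff_X_pow, coeff_C] using h' 1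
  · simpa [coeff_X, coeff_X_pow, coeff_C] using h' 0

/-- The two hypotheses exclude a factorisation (linear) × (quartic), resp.
(quadratic) × (cubic), into monic factors by comparing coefficients. -/
theorem irreducible_X_pow_five_add {c₀ c₁ c₂ c₃ c₄ : F}
    (h₁ : ∀ a b c d e : F,
      ¬ (a + b = c₄ ∧ a * b + c = c₃ ∧ a * c + d = c₂ ∧ a * d + e = c₁ ∧ a * e = c₀))
    (h₂ : ∀ a b c d e : F,
      ¬ (a + c = c₄ ∧ b + a * c + d = c₃ ∧ b * c + a * d + e = c₂ ∧ b * d + a * e = c₁ ∧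
        b * e = c₀)) :
    Irreducible (X ^ 5 + C c₄ * X ^ 4 + C c₃ * X ^ 3 + C c₂ * X ^ 2 + C c₁ * X + C c₀) := by
  set p : F[X] := X ^ 5 + C c₄ * X ^ 4 + C c₃ * X ^ 3 + C c₂ * X ^ 2 + C c₁ * X + C c₀
  have hp : p.Monic := by simp only [p]; monicity!
  have hdeg : p.natDegree = 5 := by simp only [p]; compute_degree!
  refine hp.irreducible_iff_natDegree'.2 ⟨fun h => by simp [h] at hdeg, ?_⟩
  intro f g hf hg hfg hdg
  rw [hdeg] at hdg
  have hsum : f.natDegree + g.natDegree = 5 := by rw [← hf.natDegree_mul hg, hfg, hdeg]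
  obtain hg1 | hg2 : g.natDegree = 1 ∨ g.natDegree = 2 := by
    simp only [Finset.mem_Ioc] at hdg; omega
  · rw [hf.as_sum, hg.as_sum, show f.natDegree = 4 by omega, hg1] at hfg
    simp only [Finset.sum_range_succ, Finset.sum_range_zero, zero_add, pow_zero, mul_one,
      pow_one] at hfg
    refine h₁ (g.coeff 0) (f.coeff 3) (f.coeff 2) (f.coeff 1) (f.coeff 0) ?_
    refine coeff_eq_of_X_pow_five_add_eq (Eq.trans ?_ hfg)
    simp only [map_add, map_mul]; ring
  · rw [hf.as_sum, hg.as_sum, show f.natDegree = 3 by omega, hg2] at hfg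
    simp only [Finset.sum_range_succ, Finset.sum_range_zero, zero_add, pow_zero, mul_one,
      pow_one] at hfg
    refine h₂ (g.coeff 1) (g.coeff 0) (f.coeff 2) (f.coeff 1) (f.coeff 0) ?_
    refine coeff_eq_of_X_pow_five_add_eq (Eq.trans ?_ hfg)
    simp only [map_add, map_mul]; ring

end Polynomial

theorem Module.finrank_le_natDegree_of_adjoin_eq_top {K L : Type*} [Field K] [Field L]
    [Algebra K L] {x : L} (hx : Algebra.adjoin K {x} = ⊤) {p : K[X]} (hp : p ≠ 0)
    (hpx : aeval x p = 0) : Module.finrank K L ≤ p.natDegree := by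
  have hint : IsIntegral K x := IsAlgebraic.isIntegral ⟨p, hp, hpx⟩
  rw [(PowerBasis.ofAdjoinEqTop hint hx).finrank, PowerBasis.ofAdjoinEqTop_dim]
  exact natDegree_le_natDegree (minpoly.degree_le_of_ne_zero K x hp hpx)

open IntermediateField in
theorem Algebra.norm_eq_coeff_zero_minpoly_of_natDegree_eq_finrank {K L : Type*} [Field K]
    [Field L] [Algebra K L] [FiniteDimensional K L] {x : L}
    (h : (minpoly K x).natDegree = Module.finrank K L) :
    Algebra.norm K x = (-1) ^ Module.finrank K L * (minpoly K x).coeff 0 := by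
  have hx : IsIntegral K x := .of_finite K x
  have h1 : Module.finrank K⟮x⟯ L = 1 := by
    have := Module.finrank_mul_finrank K K⟮x⟯ L
    rw [adjoin.finrank hx, h] at this
    exact (Nat.mul_eq_left Module.finrank_pos.ne').1 this
  have hgen := PowerBasis.norm_gen_eq_coeff_zero_minpoly (IntermediateField.adjoin.powerBasis hx)
  rw [show (IntermediateField.adjoin.powerBasis hx).gen = AdjoinSimple.gen K x from rfl,
    minpoly_gen, IntermediateField.adjoin.powerBasis_dim, h] at hgen
  rw [Algebra.norm_eq_norm_adjoin, h1, pow_one, hgen]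

local notation "q₅" x:max => x ^ 5 - 27 * x ^ 4 + 261 * x ^ 3 - 1077 * x ^ 2 + 1766 * x - 964

namespace Quintic

noncomputable def minpolyPi : ℤ[X] := X ^ 5 + 4 * X ^ 4 - 48 * X ^ 3 + 85 * X ^ 2 - 36 * X + 4

lemma monic_minpolyPi : minpolyPi.Monic := by unfold minpolyPi; monicity!

lemma irreducible_minpolyPi : Irreducible (minpolyPi.map (algebraMap ℤ ℚ)) := by
  refine monic_minpolyPi.irreducible_iff_irreducible_map_fraction_map.1 ?_
  refine Monic.irreducible_of_irreducible_map (Int.castRingHom (ZMod 3)) _ monic_minpolyPi ?_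
  have h : minpolyPi =
      X ^ 5 + C 4 * X ^ 4 + C (-48) * X ^ 3 + C 85 * X ^ 2 + C (-36) * X + C 4 := by
    simp only [minpolyPi, map_neg, map_ofNat]; ring
  rw [h]
  simp only [Polynomial.map_add, Polynomial.map_mul, Polynomial.map_pow, map_X, map_C]
  exact irreducible_X_pow_five_add (by decide) (by decide)

section Field

variable {L : Type*} [Field L]

/-- `π = v + 5 - β`; it generates the prime `⟨2, v⟩`. -/
def piL (β : L) : L := 71/4 - 159/8 * β + 129/16 * β ^ 2 - 5/4 * β ^ 3 + 1/16 * β ^ 4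

def twoDivPiL (β : L) : L := 31/4 - 107/8 * β + 121/16 * β ^ 2 - 5/4 * β ^ 3 + 1/16 * β ^ 4

/-- `1, β, π, 2 / π, ω` is an integral basis; `ω` reduces to a root of `X² + X + 1` modulo `π`. -/
def omegaL (β : L) : L := -111/8 + 363/16 * β - 521/32 * β ^ 2 + 3 * β ^ 3 - 5/32 * β ^ 4

/-! Each identity below holds in `ℚ[X] / (q₅)`; the multiplier of `hq` is the quotient by `q₅`. -/

variable [CharZero L] {β : L}

lemma piL_sq (hq : q₅ β = 0) : piL β ^ 2 + (2 * β - 7) * piL β + (5 - β) = 0 := by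
  unfold piL
  linear_combination (-13/64 + 23/128 * β - 13/256 * β ^ 2 + 1/256 * β ^ 3) * hq

/-- The certificate first reduces `minpolyPi` modulo the quadratic relation `piL_sq`. -/
lemma aeval_piL (hq : q₅ β = 0) : aeval (piL β) minpolyPi = 0 := by
  have hdef : piL β = 71/4 - 159/8 * β + 129/16 * β ^ 2 - 5/4 * β ^ 3 + 1/16 * β ^ 4 := rfl
  simp only [minpolyPi, map_add, map_sub, map_mul, map_pow, aeval_X, map_ofNat]
  linear_combination (piL β ^ 3 + (11 - 2 * β) * piL β ^ 2 + (24 - 35 * β + 4 * β ^ 2) * piL β +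
      (198 - 272 * β + 96 * β ^ 2 - 8 * β ^ 3)) * piL_sq hq +
    (1230 - 2101 * β + 1161 * β ^ 2 - 244 * β ^ 3 + 16 * β ^ 4) * hdef +
    (-173/8 + 365/16 * β - 33/4 * β ^ 2 + β ^ 3) * hq

lemma piL_mul_twoDivPiL (hq : q₅ β = 0) : piL β * twoDivPiL β = 2 := by
  unfold piL twoDivPiL
  linear_combination (-9/64 + 19/128 * β - 13/256 * β ^ 2 + 1/256 * β ^ 3) * hq

lemma omegaL_sq (hq : q₅ β = 0) :
    omegaL β ^ 2 = 11 * omegaL β + (209 - 21 * β - 36 * piL β + 49 * twoDivPiL β) := by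
  unfold omegaL piL twoDivPiL
  linear_combination (-105/256 + 103/512 * β - 285/1024 * β ^ 2 + 25/1024 * β ^ 3) * hq

lemma bezout_v (hq : q₅ β = 0) :
    (4 - 2 * β + twoDivPiL β) * twoDivPiL β +
      (-1 + β + piL β - twoDivPiL β) * (piL β + 2 * β - 6) = 1 := by
  unfold piL twoDivPiL
  linear_combination (-13/64 + 19/128 * β - 13/256 * β ^ 2 + 1/256 * β ^ 3) * hq

lemma piL_pow_three_mul (hq : q₅ β = 0) :
    piL β ^ 3 * (834 - 340 * β - 95 * piL β + 221 * twoDivPiL β + 42 * omegaL β) =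
      piL β - β ^ 2 + 9 * β - 16 := by
  have h₁ : piL β * (834 - 340 * β - 95 * piL β + 221 * twoDivPiL β + 42 * omegaL β) =
      251 - 101 * β - 29 * piL β + 60 * twoDivPiL β + 12 * omegaL β := by
    unfold piL twoDivPiL omegaL
    linear_combination (-325/64 + 607/128 * β - 357/256 * β ^ 2 + 21/256 * β ^ 3) * hq
  have h₂ : piL β * (251 - 101 * β - 29 * piL β + 60 * twoDivPiL β + 12 * omegaL β) =
      85 - 34 * β - 10 * piL β + 19 * twoDivPiL β + 4 * omegaL β := by
    unfold piL twoDivPiL omegaL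
    linear_combination (-41/64 + 71/128 * β - 37/256 * β ^ 2 + 1/256 * β ^ 3) * hq
  have h₃ : piL β * (85 - 34 * β - 10 * piL β + 19 * twoDivPiL β + 4 * omegaL β) =
      piL β - β ^ 2 + 9 * β - 16 := by
    unfold piL twoDivPiL omegaL
    linear_combination (1/64 - 3/128 * β + 5/256 * β ^ 2 - 1/256 * β ^ 3) * hq
  linear_combination piL β ^ 2 * h₁ + piL β * h₂ + h₃

lemma bezout_w (hq : q₅ β = 0) :
    (-17 + 32 * β - 6 * piL β - 114 * twoDivPiL β - 13 * omegaL β) * twoDivPiL β +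
      (1 + 2 * β - twoDivPiL β - omegaL β) *
        (834 - 340 * β - 95 * piL β + 221 * twoDivPiL β + 42 * omegaL β) = 1 := by
  unfold piL twoDivPiL omegaL
  linear_combination (147/32 - 139/16 * β + 335/128 * β ^ 2 - 7/32 * β ^ 3) * hq

lemma omegaL_sq_add_omegaL_add_one (hq : q₅ β = 0) :
    omegaL β ^ 2 + omegaL β + 1 =
      piL β * (-52 - 37 * β + 18 * piL β + 252 * twoDivPiL β + 20 * omegaL β) := by
  unfold piL twoDivPiL omegaL
  linear_combination (9111/256 - 18025/512 * β + 11315/1024 * β ^ 2 - 855/1024 * β ^ 3) * hq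

lemma isIntegral_piL (hq : q₅ β = 0) : IsIntegral ℤ (piL β) :=
  ⟨minpolyPi, monic_minpolyPi, by rw [← aeval_def, aeval_piL hq]⟩

/-- `2 / π` is a root of `X⁵ m(2 / X) / 4`, which has integer coefficients because `m(0) = 4` and
`m'(0) = -36` is even. -/
lemma isIntegral_twoDivPiL (hq : q₅ β = 0) : IsIntegral ℤ (twoDivPiL β) := by
  have hprod := piL_mul_twoDivPiL hq
  have hne : piL β ≠ 0 := by rintro h; rw [h, zero_mul] at hprod; norm_num at hprod
  have hm := aeval_piL hq
  simp only [minpolyPi, map_add, map_sub, map_mul, map_pow, aeval_X, map_ofNat] at hm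
  refine ⟨X ^ 5 - 18 * X ^ 4 + 85 * X ^ 3 - 96 * X ^ 2 + 16 * X + 8, by monicity!, ?_⟩
  rw [← aeval_def, eq_div_of_mul_eq hne ((mul_comm _ _).trans hprod)]
  simp only [map_add, map_sub, map_mul, map_pow, aeval_X, map_ofNat]
  field_simp
  linear_combination 8 * hm

end Field

section RingOfIntegers

variable {L : Type*} [Field L] {b : 𝓞 L}

lemma map_q₅ (hb : q₅ b = 0) : q₅ (algebraMap (𝓞 L) L b) = 0 := by
  simpa only [map_sub, map_add, map_mul, map_pow, map_ofNat, map_zero] using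
    congrArg (algebraMap (𝓞 L) L) hb

variable [NumberField L]

noncomputable def pi (hb : q₅ b = 0) : 𝓞 L :=
  ⟨piL (algebraMap (𝓞 L) L b), isIntegral_piL (map_q₅ hb)⟩

noncomputable def twoDivPi (hb : q₅ b = 0) : 𝓞 L :=
  ⟨twoDivPiL (algebraMap (𝓞 L) L b), isIntegral_twoDivPiL (map_q₅ hb)⟩

lemma algebraMap_pi (hb : q₅ b = 0) :
    algebraMap (𝓞 L) L (pi hb) = piL (algebraMap (𝓞 L) L b) := rfl

lemma algebraMap_twoDivPi (hb : q₅ b = 0) :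
    algebraMap (𝓞 L) L (twoDivPi hb) = twoDivPiL (algebraMap (𝓞 L) L b) := rfl

noncomputable def omega (hb : q₅ b = 0) : 𝓞 L :=
  ⟨omegaL (algebraMap (𝓞 L) L b), IsIntegral.of_sq_eq (isIntegral_algebraMap (x := (11 : ℤ)))
    (RingOfIntegers.isIntegral_coe (209 - 21 * b - 36 * pi hb + 49 * twoDivPi hb)) (by
      simpa only [map_sub, map_add, map_mul, map_ofNat, algebraMap_pi, algebraMap_twoDivPi,
        eq_intCast, Int.cast_ofNat] using omegaL_sq (map_q₅ hb))⟩

lemma algebraMap_omega (hb : q₅ b = 0) :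
    algebraMap (𝓞 L) L (omega hb) = omegaL (algebraMap (𝓞 L) L b) := rfl

lemma pi_mul_twoDivPi (hb : q₅ b = 0) : pi hb * twoDivPi hb = 2 := by
  ext
  simpa only [RingOfIntegers.coe_eq_algebraMap, map_mul, map_ofNat, algebraMap_pi,
    algebraMap_twoDivPi] using piL_mul_twoDivPiL (map_q₅ hb)

theorem span_two_eq (hb : q₅ b = 0) :
    Ideal.span {2, pi hb + b - 5} = Ideal.span {pi hb} := by
  have hq := map_q₅ hb
  have hv : pi hb * (pi hb + 2 * b - 6) = pi hb + b - 5 := by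
    ext
    simp only [map_add, map_sub, map_mul, map_ofNat, algebraMap_pi]
    linear_combination piL_sq hq
  have hcop : IsCoprime (twoDivPi hb) (pi hb + 2 * b - 6) := by
    refine ⟨4 - 2 * b + twoDivPi hb, -1 + b + pi hb - twoDivPi hb, ?_⟩
    ext
    simpa only [RingOfIntegers.coe_eq_algebraMap, map_add, map_sub, map_mul, map_ofNat, map_one,
      map_neg, algebraMap_pi, algebraMap_twoDivPi] using bezout_v hq
  simpa only [pi_mul_twoDivPi, hv] using Ideal.span_pair_mul_eq_span_singleton (π := pi hb) hcop

theorem span_eight_eq (hb : q₅ b = 0) :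
    Ideal.span {8, 5 * (pi hb - b ^ 2 + 9 * b - 16)} = Ideal.span {pi hb} ^ 3 := by
  have hq := map_q₅ hb
  set d : 𝓞 L := 834 - 340 * b - 95 * pi hb + 221 * twoDivPi hb + 42 * omega hb
  have hd : pi hb ^ 3 * (5 * d) = 5 * (pi hb - b ^ 2 + 9 * b - 16) := by
    rw [mul_left_comm]
    congr 1
    ext
    simpa only [d, map_add, map_sub, map_mul, map_pow, map_ofNat, algebraMap_pi,
      algebraMap_twoDivPi, algebraMap_omega] using piL_pow_three_mul hq
  have h8 : pi hb ^ 3 * twoDivPi hb ^ 3 = 8 := by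
    rw [← mul_pow, pi_mul_twoDivPi]; norm_num
  have hcop5 : IsCoprime (twoDivPi hb) 5 :=
    ⟨-2 * pi hb, 1, by linear_combination -2 * pi_mul_twoDivPi hb⟩
  have hcopd : IsCoprime (twoDivPi hb) d := by
    refine ⟨-17 + 32 * b - 6 * pi hb - 114 * twoDivPi hb - 13 * omega hb,
      1 + 2 * b - twoDivPi hb - omega hb, ?_⟩
    ext
    simpa only [d, map_add, map_sub, map_mul, map_neg, map_ofNat, map_one, algebraMap_pi,
      algebraMap_twoDivPi, algebraMap_omega] using bezout_w hq
  rw [Ideal.span_singleton_pow, ← h8, ← hd]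
  exact Ideal.span_pair_mul_eq_span_singleton (hcop5.mul_right hcopd).pow_left

theorem absNorm_span_pi (hb : q₅ b = 0) (hgen : Algebra.adjoin ℚ {algebraMap (𝓞 L) L b} = ⊤) :
    Ideal.absNorm (Ideal.span {pi hb}) = 4 := by
  have hq := map_q₅ hb
  have hmin : minpoly ℚ (piL (algebraMap (𝓞 L) L b)) = minpolyPi.map (algebraMap ℤ ℚ) :=
    (minpoly.eq_of_irreducible_of_monic irreducible_minpolyPi
      (by rw [aeval_map_algebraMap, aeval_piL hq]) (monic_minpolyPi.map _)).symm
  have hdeg : (minpolyPi.map (algebraMap ℤ ℚ)).natDegree = 5 := by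
    rw [monic_minpolyPi.natDegree_map]; unfold minpolyPi; compute_degree!
  have hfin : Module.finrank ℚ L = 5 := by
    refine le_antisymm ?_ (hdeg ▸ hmin ▸ minpoly.natDegree_le _)
    have hp : (X ^ 5 - 27 * X ^ 4 + 261 * X ^ 3 - 1077 * X ^ 2 + 1766 * X - 964 : ℚ[X]).natDegree
      = 5 := by compute_degree!
    refine hp ▸ Module.finrank_le_natDegree_of_adjoin_eq_top hgen ?_ ?_
    · exact ne_zero_of_natDegree_gt (n := 0) (by rw [hp]; norm_num)
    · simpa only [map_sub, map_add, map_mul, map_pow, aeval_X, map_ofNat] using hq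
  have hnorm : Algebra.norm ℚ (piL (algebraMap (𝓞 L) L b)) = -4 := by
    rw [Algebra.norm_eq_coeff_zero_minpoly_of_natDegree_eq_finrank (by rw [hmin, hdeg, hfin]),
      hmin, hfin, coeff_map]
    norm_num [minpolyPi]
  have hnormℤ : Algebra.norm ℤ (pi hb) = -4 := by
    exact_mod_cast (Algebra.coe_norm_int (pi hb)).trans hnorm
  rw [Ideal.absNorm_span_singleton, hnormℤ]
  rfl

theorem isPrime_span_pi (hb : q₅ b = 0) (hgen : Algebra.adjoin ℚ {algebraMap (𝓞 L) L b} = ⊤) :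
    (Ideal.span {pi hb}).IsPrime := by
  have hq := map_q₅ hb
  set P := Ideal.span {pi hb}
  have hcard : Nat.card (𝓞 L ⧸ P) = 4 := by
    rw [← absNorm_span_pi hb hgen, Ideal.absNorm_apply, Submodule.cardQuot_apply]
  have h2 : (2 : 𝓞 L ⧸ P) = 0 := by
    rw [← map_ofNat (Ideal.Quotient.mk P) 2, Ideal.Quotient.eq_zero_iff_mem,
      ← pi_mul_twoDivPi hb]
    exact Ideal.mem_span_singleton.2 (dvd_mul_right _ _)
  have hω : Ideal.Quotient.mk P (omega hb) ^ 2 + Ideal.Quotient.mk P (omega hb) + 1 = 0 := by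
    rw [← map_pow, ← map_add, ← map_one (Ideal.Quotient.mk P), ← map_add,
      Ideal.Quotient.eq_zero_iff_mem, Ideal.mem_span_singleton]
    refine ⟨-52 - 37 * b + 18 * pi hb + 252 * twoDivPi hb + 20 * omega hb, ?_⟩
    ext
    simpa only [map_add, map_sub, map_mul, map_pow, map_ofNat, map_one, map_neg, algebraMap_pi,
      algebraMap_twoDivPi, algebraMap_omega] using omegaL_sq_add_omegaL_add_one hq
  exact (Ideal.Quotient.maximal_of_isField _ (isField_of_card_eq_four hcard h2 hω)).isPrime

end RingOfIntegers

end Quintic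

/-- Let `b ∈ 𝓞 L` be a root of
`q₅(x) = x⁵ − 27x⁴ + 261x³ − 1077x² + 1766x − 964` generating `L = ℚ(b)`, and let
`w, v ∈ L` be the explicitly given elements.  Then `w` and `v` are algebraic integers, the
ideal `⟨2, v⟩` of `𝓞 L` is a prime ideal lying over `2` of absolute norm `4`, and
`⟨8, w⟩ = ⟨2, v⟩³`; in particular `⟨8, w⟩` has absolute norm `64`. -/
theorem stmt_18 (L : Type*) [Field L] [NumberField L] (b : 𝓞 L)
    (hb : b ^ 5 - 27 * b ^ 4 + 261 * b ^ 3 - 1077 * b ^ 2 + 1766 * b - 964 = 0)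
    (hgen : Algebra.adjoin ℚ {algebraMap (𝓞 L) L b} = ⊤)
    (β : L) (hβ : β = algebraMap (𝓞 L) L b)
    (w v : L)
    (hw : w = 35/4 - 435/8 * β + 565/16 * β^2 - 25/4 * β^3 + 5/16 * β^4)
    (hv : v = 51/4 - 151/8 * β + 129/16 * β^2 - 5/4 * β^3 + 1/16 * β^4) :
    ∃ w0 v0 : 𝓞 L, algebraMap (𝓞 L) L w0 = w ∧ algebraMap (𝓞 L) L v0 = v ∧
      (Ideal.span {(2 : 𝓞 L), v0}).IsPrime ∧ (2 : 𝓞 L) ∈ Ideal.span {(2 : 𝓞 L), v0} ∧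
      Ideal.absNorm (Ideal.span {(2 : 𝓞 L), v0}) = 4 ∧
      Ideal.span {(8 : 𝓞 L), w0} = (Ideal.span {(2 : 𝓞 L), v0}) ^ 3 ∧
      Ideal.absNorm (Ideal.span {(8 : 𝓞 L), w0}) = 64 := by
  subst hβ hw hv
  refine ⟨5 * (Quintic.pi hb - b ^ 2 + 9 * b - 16), Quintic.pi hb + b - 5, ?_, ?_, ?_,
    Ideal.subset_span (Set.mem_insert _ _), ?_, ?_, ?_⟩
  · simp only [map_mul, map_sub, map_add, map_pow, map_ofNat, Quintic.algebraMap_pi, Quintic.piL]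
    ring
  · simp only [map_sub, map_add, map_ofNat, Quintic.algebraMap_pi, Quintic.piL]
    ring
  · rw [Quintic.span_two_eq hb]
    exact Quintic.isPrime_span_pi hb hgen
  · rw [Quintic.span_two_eq hb]
    exact Quintic.absNorm_span_pi hb hgen
  · rw [Quintic.span_eight_eq hb, Quintic.span_two_eq hb]
  · rw [Quintic.span_eight_eq hb, map_pow, Quintic.absNorm_span_pi hb hgen]
    norm_num
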